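/- arXiv:2512.12251 — 5 statements merged into one kernel-verified Lean document; each statement's English description precedes it below -/
import Mathlib

section
/- Let H_n (n ≥ 2) be the graph formed from two stars K_{1,n+1}, with centers c and c' and with n leaves of each star pairwise identified (the identified vertices being p_1,…,p_n), leaving one non-identified leaf p adjacent to c and one non-identified leaf p' adjacent to c'. In any mutual-visibility coloring of H_n using exactly two colors, the vertices c and p receive different colors, and the vertices c' and p' receive different colors. -/
def MVSet {V : Type*} (G : SimpleGraph V) (S : Set V) : Prop :=
  ∀ x ∈ S, ∀ y ∈ S, ∃ p : G.Walk x y, p.IsPath ∧ p.length = G.dist x y ∧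
    ∀ z ∈ p.support, z ≠ x → z ≠ y → z ∉ S

def MVColoring {V : Type*} {α : Type*} (G : SimpleGraph V) (f : V → α) : Prop :=
  ∀ a : α, MVSet G {v | f v = a}

/-- The vertices of the graph `H n`: two star centers `c, c'`, two pendant
vertices `p, p'`, and `n` identified leaves. -/
inductive HVert (n : ℕ) : Type
  | c : HVert n
  | c' : HVert n
  | p : HVert n
  | p' : HVert n
  | leaf : Fin n → HVert n
  deriving DecidableEq

/-- The graph `H n`: two stars on `n+2` vertices with their `n` leaves
pairwise identified; edges are `cp`, `c'p'` and `c pᵢ`, `c' pᵢ` for `i ∈ [n]`. -/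
def Hgraph (n : ℕ) : SimpleGraph (HVert n) :=
  SimpleGraph.fromRel (fun x y =>
    match x, y with
    | .c, .p => True
    | .c', .p' => True
    | .c, .leaf _ => True
    | .c', .leaf _ => True
    | _, _ => False)


lemma adj_p {n : ℕ} {z : HVert n} (h : (Hgraph n).Adj HVert.p z) : z = HVert.c := by
  cases z <;> simp [Hgraph, SimpleGraph.fromRel_adj] at h <;> rfl

lemma adj_p' {n : ℕ} {z : HVert n} (h : (Hgraph n).Adj HVert.p' z) : z = HVert.c' := by
  cases z <;> simp [Hgraph, SimpleGraph.fromRel_adj] at h <;> rfl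

lemma walk_p_mem_c {n : ℕ} {y : HVert n} (w : (Hgraph n).Walk HVert.p y)
    (hy : y ≠ HVert.p) : HVert.c ∈ w.support := by
  cases w with
  | nil => exact absurd rfl hy
  | cons h q =>
    have hz := adj_p h
    subst hz
    simp [SimpleGraph.Walk.support_cons]

lemma walk_p'_mem_c' {n : ℕ} {y : HVert n} (w : (Hgraph n).Walk HVert.p' y)
    (hy : y ≠ HVert.p') : HVert.c' ∈ w.support := by
  cases w with
  | nil => exact absurd rfl hy
  | cons h q =>
    have hz := adj_p' h
    subst hz
    simp [SimpleGraph.Walk.support_cons]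

lemma fin2 : ∀ (a x y : Fin 2), x ≠ a → y ≠ a → x = y := by decide

/-- In any mutual-visibility coloring of `H n` (`n ≥ 2`) with two colors,
`c` and `p` get different colors, and `c'` and `p'` get different colors. -/
theorem Hn_center_pendant_diff_colors (n : ℕ) (hn : 2 ≤ n)
    (f : HVert n → Fin 2) (hf : MVColoring (Hgraph n) f) :
    f HVert.c ≠ f HVert.p ∧ f HVert.c' ≠ f HVert.p' := by
  have i0 : Fin n := ⟨0, by omega⟩
  constructor
  · intro hcp
    set a := f HVert.c with ha
    have hpmem : HVert.p ∈ {v : HVert n | f v = a} := hcp.symm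
    have hleaf : ∀ i : Fin n, f (HVert.leaf i) ≠ a := by
      intro i hi
      obtain ⟨w, _, _, hsup⟩ := hf a HVert.p hpmem (HVert.leaf i) hi
      exact hsup HVert.c (walk_p_mem_c w (by simp)) (by simp) (by simp) rfl
    have hp' : f HVert.p' ≠ a := by
      intro hi
      obtain ⟨w, _, _, hsup⟩ := hf a HVert.p hpmem HVert.p' hi
      exact hsup HVert.c (walk_p_mem_c w (by simp)) (by simp) (by simp) rfl
    by_cases hc' : f HVert.c' = a
    · obtain ⟨w, _, _, hsup⟩ := hf a HVert.p hpmem HVert.c' hc'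
      exact hsup HVert.c (walk_p_mem_c w (by simp)) (by simp) (by simp) rfl
    · set b := f HVert.c' with hb
      have hpb : f HVert.p' = b := fin2 a _ _ hp' hc'
      have hlb : f (HVert.leaf i0) = b := fin2 a _ _ (hleaf i0) hc'
      obtain ⟨w, _, _, hsup⟩ := hf b HVert.p' hpb (HVert.leaf i0) hlb
      exact hsup HVert.c' (walk_p'_mem_c' w (by simp)) (by simp) (by simp) rfl
  · intro hcp
    set a := f HVert.c' with ha
    have hpmem : HVert.p' ∈ {v : HVert n | f v = a} := hcp.symm
    have hleaf : ∀ i : Fin n, f (HVert.leaf i) ≠ a := by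
      intro i hi
      obtain ⟨w, _, _, hsup⟩ := hf a HVert.p' hpmem (HVert.leaf i) hi
      exact hsup HVert.c' (walk_p'_mem_c' w (by simp)) (by simp) (by simp) rfl
    have hp : f HVert.p ≠ a := by
      intro hi
      obtain ⟨w, _, _, hsup⟩ := hf a HVert.p' hpmem HVert.p hi
      exact hsup HVert.c' (walk_p'_mem_c' w (by simp)) (by simp) (by simp) rfl
    by_cases hc : f HVert.c = a
    · obtain ⟨w, _, _, hsup⟩ := hf a HVert.p' hpmem HVert.c hc
      exact hsup HVert.c' (walk_p'_mem_c' w (by simp)) (by simp) (by simp) rfl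
    · set b := f HVert.c with hb
      have hpb : f HVert.p = b := fin2 a _ _ hp hc
      have hlb : f (HVert.leaf i0) = b := fin2 a _ _ (hleaf i0) hc
      obtain ⟨w, _, _, hsup⟩ := hf b HVert.p hpb (HVert.leaf i0) hlb
      exact hsup HVert.c (walk_p_mem_c w (by simp)) (by simp) (by simp) rfl
end

section
/- Let H_n (n ≥ 2) be the graph formed from two stars on n+2 vertices with centers c, c', non-identified leaves p, p', and n identified leaves p_1,…,p_n. In any mutual-visibility coloring of H_n with two colors, the set {p_1, …, p_n} contains at least two vertices of different colors (i.e., the identified leaves are not all the same color). -/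
namespace HnAux

open SimpleGraph

lemma adj_p {n : ℕ} {v : HVert n} (h : (Hgraph n).Adj .p v) : v = .c := by
  cases v <;> simp [Hgraph, SimpleGraph.fromRel_adj] at h <;> try rfl

lemma adj_p' {n : ℕ} {v : HVert n} (h : (Hgraph n).Adj .p' v) : v = .c' := by
  cases v <;> simp [Hgraph, SimpleGraph.fromRel_adj] at h <;> try rfl

lemma adj_c {n : ℕ} {v : HVert n} (h : (Hgraph n).Adj .c v) :
    v = .p ∨ ∃ i, v = .leaf i := by
  cases v <;> simp [Hgraph, SimpleGraph.fromRel_adj] at h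
  · exact Or.inl rfl
  · exact Or.inr ⟨_, rfl⟩

lemma adj_c' {n : ℕ} {v : HVert n} (h : (Hgraph n).Adj .c' v) :
    v = .p' ∨ ∃ i, v = .leaf i := by
  cases v <;> simp [Hgraph, SimpleGraph.fromRel_adj] at h
  · exact Or.inl rfl
  · exact Or.inr ⟨_, rfl⟩

/-- Any walk from `p` to `y ≠ p` passes through `c`. -/
lemma c_mem_from_p {n : ℕ} {y : HVert n} (W : (Hgraph n).Walk .p y) (hy : y ≠ .p) :
    HVert.c ∈ W.support := by
  cases W with
  | nil => exact absurd rfl hy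
  | cons h W' =>
    have := adj_p h; subst this
    exact List.mem_cons_of_mem _ W'.start_mem_support

/-- Any walk from `p'` to `y ≠ p'` passes through `c'`. -/
lemma c'_mem_from_p' {n : ℕ} {y : HVert n} (W : (Hgraph n).Walk .p' y) (hy : y ≠ .p') :
    HVert.c' ∈ W.support := by
  cases W with
  | nil => exact absurd rfl hy
  | cons h W' =>
    have := adj_p' h; subst this
    exact List.mem_cons_of_mem _ W'.start_mem_support

/-- Any path from `p` to a vertex that is neither `p`, `c` nor a leaf passes through a leaf. -/
lemma leaf_mem_from_p {n : ℕ} {y : HVert n} (W : (Hgraph n).Walk .p y) (hW : W.IsPath)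
    (hy0 : y ≠ .p) (hy1 : y ≠ .c) (hy2 : ∀ i, y ≠ .leaf i) :
    ∃ i, HVert.leaf i ∈ W.support := by
  cases W with
  | nil => exact absurd rfl hy0
  | cons h W' =>
    have := adj_p h; subst this
    cases W' with
    | nil => exact absurd rfl hy1
    | cons h2 W'' =>
      rcases adj_c h2 with h3 | ⟨i, h3⟩ <;> subst h3
      · exfalso
        have := (SimpleGraph.Walk.cons_isPath_iff _ _).1 hW
        exact this.2 (List.mem_cons_of_mem _ W''.start_mem_support)
      · exact ⟨i, List.mem_cons_of_mem _ (List.mem_cons_of_mem _ W''.start_mem_support)⟩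

lemma leaf_mem_from_p' {n : ℕ} {y : HVert n} (W : (Hgraph n).Walk .p' y) (hW : W.IsPath)
    (hy0 : y ≠ .p') (hy1 : y ≠ .c') (hy2 : ∀ i, y ≠ .leaf i) :
    ∃ i, HVert.leaf i ∈ W.support := by
  cases W with
  | nil => exact absurd rfl hy0
  | cons h W' =>
    have := adj_p' h; subst this
    cases W' with
    | nil => exact absurd rfl hy1
    | cons h2 W'' =>
      rcases adj_c' h2 with h3 | ⟨i, h3⟩ <;> subst h3
      · exfalso
        have := (SimpleGraph.Walk.cons_isPath_iff _ _).1 hW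
        exact this.2 (List.mem_cons_of_mem _ W''.start_mem_support)
      · exact ⟨i, List.mem_cons_of_mem _ (List.mem_cons_of_mem _ W''.start_mem_support)⟩

/-- Any path from `c` to `c'` passes through a leaf. -/
lemma leaf_mem_c_c' {n : ℕ} (W : (Hgraph n).Walk .c .c') (hW : W.IsPath) :
    ∃ i, HVert.leaf i ∈ W.support := by
  cases W with
  | cons h W' =>
    rcases adj_c h with h3 | ⟨i, h3⟩ <;> subst h3
    · exfalso
      cases W' with
      | cons h2 W'' =>
        have h4 := adj_p h2; subst h4
        have := (SimpleGraph.Walk.cons_isPath_iff _ _).1 hW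
        exact this.2 (List.mem_cons_of_mem _ W''.start_mem_support)
    · exact ⟨i, List.mem_cons_of_mem _ W'.start_mem_support⟩

lemma fin2_eq (a x y : Fin 2) (hx : x ≠ a) (hy : y ≠ a) : x = y := by
  revert a x y; decide

lemma fin2_eq' (a x y : Fin 2) (hx : x ≠ y) (hy : y ≠ a) : x = a := by
  revert a x y; decide

end HnAux

/-- In any mutual-visibility coloring of `H n` (`n ≥ 2`) with two colors,
the identified leaves `p₁, …, pₙ` are not all colored alike. -/
theorem Hn_leaves_not_monochromatic (n : ℕ) (hn : 2 ≤ n)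
    (f : HVert n → Fin 2) (hf : MVColoring (Hgraph n) f) :
    ∃ i j : Fin n, f (HVert.leaf i) ≠ f (HVert.leaf j) := by
  open HnAux in
  by_contra hcon
  push_neg at hcon
  have i0 : Fin n := ⟨0, by omega⟩
  set a := f (.leaf i0) with ha
  have hleaf : ∀ i, f (HVert.leaf i) = a := fun i => hcon i i0
  have key : ∀ x y : HVert n, f x = f y →
      ∃ W : (Hgraph n).Walk x y, W.IsPath ∧
        ∀ z ∈ W.support, z ≠ x → z ≠ y → f z ≠ f x := by
    intro x y hxy
    obtain ⟨W, hp, -, hz⟩ := hf (f x) x rfl y hxy.symm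
    exact ⟨W, hp, fun z hz1 h1 h2 => hz z hz1 h1 h2⟩
  -- main case analysis
  by_cases hp : f .p = a
  · -- pair (p, leaf i0): c is internal, so f c ≠ a
    have hc : f .c ≠ a := by
      obtain ⟨W, hW, hav⟩ := key .p (.leaf i0) (by rw [hp, hleaf])
      have := hav .c (HnAux.c_mem_from_p W (by simp)) (by simp) (by simp)
      rwa [hp] at this
    -- pair (p, c'): a leaf is internal, contradiction if f c' = a
    have hc' : f .c' ≠ a := by
      intro hc'
      obtain ⟨W, hW, hav⟩ := key .p .c' (by rw [hp, hc'])
      obtain ⟨i, hi⟩ := HnAux.leaf_mem_from_p W hW (by simp) (by simp) (by simp)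
      exact hav _ hi (by simp) (by simp) (by rw [hleaf, hp])
    -- pair (p, p'): a leaf is internal, contradiction if f p' = a
    have hp' : f .p' ≠ a := by
      intro hp'
      obtain ⟨W, hW, hav⟩ := key .p .p' (by rw [hp, hp'])
      obtain ⟨i, hi⟩ := HnAux.leaf_mem_from_p W hW (by simp) (by simp) (by simp)
      exact hav _ hi (by simp) (by simp) (by rw [hleaf, hp])
    -- pair (p', c): both have the non-a color; c' is internal, contradiction
    obtain ⟨W, hW, hav⟩ := key .p' .c (HnAux.fin2_eq a _ _ hp' hc)
    have := hav .c' (HnAux.c'_mem_from_p' W (by simp)) (by simp) (by simp)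
    exact this (HnAux.fin2_eq a _ _ hc' hp')
  · by_cases hp' : f .p' = a
    · -- mirror case
      have hc' : f .c' ≠ a := by
        obtain ⟨W, hW, hav⟩ := key .p' (.leaf i0) (by rw [hp', hleaf])
        have := hav .c' (HnAux.c'_mem_from_p' W (by simp)) (by simp) (by simp)
        rwa [hp'] at this
      have hc : f .c ≠ a := by
        intro hc
        obtain ⟨W, hW, hav⟩ := key .p' .c (by rw [hp', hc])
        obtain ⟨i, hi⟩ := HnAux.leaf_mem_from_p' W hW (by simp) (by simp) (by simp)
        exact hav _ hi (by simp) (by simp) (by rw [hleaf, hp'])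
      -- pair (p, c'): both non-a; c is internal, contradiction
      obtain ⟨W, hW, hav⟩ := key .p .c' (HnAux.fin2_eq a _ _ hp hc')
      have := hav .c (HnAux.c_mem_from_p W (by simp)) (by simp) (by simp)
      exact this (HnAux.fin2_eq a _ _ hc hp)
    · -- f p, f p' both ≠ a, hence equal
      have hpp' : f .p = f .p' := HnAux.fin2_eq a _ _ hp hp'
      have hc : f .c = a := by
        obtain ⟨W, hW, hav⟩ := key .p .p' hpp'
        have := hav .c (HnAux.c_mem_from_p W (by simp)) (by simp) (by simp)
        exact HnAux.fin2_eq' a _ _ this hp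
      have hc' : f .c' = a := by
        obtain ⟨W, hW, hav⟩ := key .p' .p hpp'.symm
        have := hav .c' (HnAux.c'_mem_from_p' W (by simp)) (by simp) (by simp)
        exact HnAux.fin2_eq' a _ _ this hp'
      -- pair (c, c'): both a; a leaf is internal, contradiction
      obtain ⟨W, hW, hav⟩ := key .c .c' (by rw [hc, hc'])
      obtain ⟨i, hi⟩ := HnAux.leaf_mem_c_c' W hW
      exact hav _ hi (by simp) (by simp) (by rw [hleaf, hc])
end

section
/- In the glued binary tree GT(r), for any two quasi-leaves v_i and v_j there exist exactly two geodesic (shortest) v_i–v_j paths: one whose internal vertices lie entirely in the first copy of the binary tree, and one whose internal vertices lie entirely in the second copy; together these two paths induce a cycle C_{i,j}. -/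
noncomputable def chiMu {V : Type*} (G : SimpleGraph V) : ℕ :=
  sInf {k : ℕ | ∃ f : V → Fin k, MVColoring G f}

/-- `a` is a child of `b` in the tree of finite sequences. -/
def IsChild {t : ℕ} (a b : List (Fin t)) : Prop := ∃ x : Fin t, a = b ++ [x]

/-- The vertex set of the glued `t`-ary tree `GT(r,t)`: vertices of the first
copy of the perfect `t`-ary tree of depth `r` (including the identified leaves,
the quasi-leaves), together with the internal vertices of the second copy. -/
def GTVert (r t : ℕ) : Type :=
  {l : List (Fin t) // l.length ≤ r} ⊕ {l : List (Fin t) // l.length < r}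

/-- The glued `t`-ary tree `GT(r,t)`: two copies of the perfect `t`-ary tree of
depth `r` with their leaves pairwise identified. -/
def GT (r t : ℕ) : SimpleGraph (GTVert r t) :=
  SimpleGraph.fromRel (fun u v =>
    match u, v with
    | .inl a, .inl b => IsChild a.1 b.1
    | .inr a, .inr b => IsChild a.1 b.1
    | .inl a, .inr b => a.1.length = r ∧ IsChild a.1 b.1
    | .inr _, .inl _ => False)

/-- Quasi-leaves of `GT(r,t)`: the identified leaves of the two copies. -/
def IsQuasiLeaf {r t : ℕ} (v : GTVert r t) : Prop :=
  match v with
  | .inl a => a.1.length = r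
  | .inr _ => False

/-- Vertices in the first copy of the tree, not quasi-leaves. -/
def InCopyOne {r t : ℕ} (v : GTVert r t) : Prop :=
  match v with
  | .inl a => a.1.length < r
  | .inr _ => False

/-- Vertices in the second copy of the tree, not quasi-leaves. -/
def InCopyTwo {r t : ℕ} (v : GTVert r t) : Prop :=
  match v with
  | .inl _ => False
  | .inr _ => True

/-- A geodesic: a path realizing the distance between its endpoints. -/
def IsGeodesic {V : Type*} (G : SimpleGraph V) {u v : V} (p : G.Walk u v) : Prop :=
  p.IsPath ∧ p.length = G.dist u v

/-!
Label every vertex of `GT(r)` by its word in the binary tree, so that the two copies of a tree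
vertex share a label, and measure a vertex by the tree distance from its label to the label of
the target quasi-leaf `v`. This potential changes by one along every edge, and from every
non-quasi-leaf vertex of either copy some neighbour in the same copy (or `v` itself) is one step
closer; hence the geodesics to `v` are exactly the walks along which the potential drops at every
step, and `dist u v` is the tree distance of the labels. Such a walk meets no quasi-leaf besides
its ends, since the tree path between two leaves contains no third leaf, and at a non-quasi-leaf
vertex the closer neighbour is unique. So a geodesic from `u` is determined by its first step, and
the quasi-leaf `u` has exactly two neighbours: its parent in each copy.
-/

namespace List

theorem IsPrefix.exists_append_singleton_prefix {α : Type*} {x l : List α} (hx : x <+: l)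
    (hlt : x.length < l.length) : ∃ i, x ++ [i] <+: l := by
  obtain ⟨_ | ⟨i, s⟩, rfl⟩ := hx
  · simp at hlt
  · exact ⟨i, s, by simp⟩

variable {α : Type*} [DecidableEq α] {x y z c : List α} {i : α}

def commonPrefixLength : List α → List α → ℕ
  | a :: l, b :: l' => if a = b then commonPrefixLength l l' + 1 else 0
  | _, _ => 0

@[simp] theorem commonPrefixLength_nil_left : commonPrefixLength [] y = 0 := rfl

@[simp] theorem commonPrefixLength_nil_right : commonPrefixLength x ([] : List α) = 0 := by
  cases x <;> rfl

theorem commonPrefixLength_comm (x y : List α) :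
    commonPrefixLength x y = commonPrefixLength y x := by
  induction x generalizing y with
  | nil => simp
  | cons a x ih =>
    cases y with
    | nil => simp
    | cons b y => by_cases h : a = b <;> simp [commonPrefixLength, h, eq_comm, ih]

theorem commonPrefixLength_le_length_left (x y : List α) :
    commonPrefixLength x y ≤ x.length := by
  induction x generalizing y with
  | nil => simp
  | cons a x ih =>
    cases y with
    | nil => simp
    | cons b y => simp only [commonPrefixLength]; split <;> simp [ih]

theorem commonPrefixLength_le_length_right (x y : List α) : commonPrefixLength x y ≤ y.length :=
  commonPrefixLength_comm x y ▸ commonPrefixLength_le_length_left y x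

theorem commonPrefixLength_eq_length_iff : commonPrefixLength x y = x.length ↔ x <+: y := by
  induction x generalizing y with
  | nil => simp
  | cons a x ih =>
    cases y with
    | nil => simp
    | cons b y => by_cases h : a = b <;> simp [commonPrefixLength, h, ih]

theorem min_commonPrefixLength_le (x y z : List α) :
    min (commonPrefixLength x y) (commonPrefixLength y z) ≤ commonPrefixLength x z := by
  induction x generalizing y z with
  | nil => simp
  | cons a x ih =>
    cases y with
    | nil => simp
    | cons b y =>
      cases z with
      | nil => simp
      | cons c z =>
        by_cases hab : a = b
        · by_cases hbc : b = c
          · subst hab hbc; simpa [commonPrefixLength] using ih y z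
          · simp [commonPrefixLength, hbc]
        · simp [commonPrefixLength, hab]

theorem commonPrefixLength_append_singleton_of_not_prefix (h : ¬ x ++ [i] <+: c) :
    commonPrefixLength (x ++ [i]) c = commonPrefixLength x c := by
  induction x generalizing c with
  | nil =>
    cases c with
    | nil => simp
    | cons b c => simp_all [commonPrefixLength]
  | cons a x ih =>
    cases c with
    | nil => simp
    | cons b c => by_cases hab : a = b <;> simp_all [commonPrefixLength]

/-- The distance in the rooted tree of all lists, where `x` is the parent of `x ++ [i]`: the path
from `x` to `y` climbs to their longest common prefix and descends again. -/
def treeDist (x y : List α) : ℕ :=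
  (x.length - commonPrefixLength x y) + (y.length - commonPrefixLength x y)

theorem treeDist_comm (x y : List α) : treeDist x y = treeDist y x := by
  simp only [treeDist, commonPrefixLength_comm x y]; omega

theorem treeDist_eq_zero_iff : treeDist x y = 0 ↔ x = y := by
  refine ⟨fun h => ?_, fun h => ?_⟩
  · have hx := commonPrefixLength_le_length_left x y
    have hy := commonPrefixLength_le_length_right x y
    exact (commonPrefixLength_eq_length_iff.1 (by unfold treeDist at h; omega)).eq_of_length
      (by unfold treeDist at h; omega)
  · subst h; simp [treeDist, commonPrefixLength_eq_length_iff.2 (prefix_refl x)]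

@[simp] theorem treeDist_self (x : List α) : treeDist x x = 0 := treeDist_eq_zero_iff.2 rfl

theorem treeDist_append_singleton_of_prefix (h : x ++ [i] <+: c) :
    treeDist (x ++ [i]) c + 1 = treeDist x c := by
  have hx := commonPrefixLength_eq_length_iff.2 ((prefix_append x [i]).trans h)
  have hxi := commonPrefixLength_eq_length_iff.2 h
  have := h.length_le
  simp only [length_append, length_singleton] at hxi this
  simp only [treeDist, hx, hxi, length_append, length_singleton]
  omega

theorem treeDist_append_singleton_of_not_prefix (h : ¬ x ++ [i] <+: c) :
    treeDist (x ++ [i]) c = treeDist x c + 1 := by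
  have := commonPrefixLength_le_length_left x c
  simp only [treeDist, commonPrefixLength_append_singleton_of_not_prefix h, length_append,
    length_singleton]
  omega

theorem treeDist_append_singleton (x c : List α) (i : α) :
    treeDist (x ++ [i]) c + 1 = treeDist x c ∨ treeDist (x ++ [i]) c = treeDist x c + 1 := by
  by_cases h : x ++ [i] <+: c
  · exact .inl (treeDist_append_singleton_of_prefix h)
  · exact .inr (treeDist_append_singleton_of_not_prefix h)

theorem treeDist_dropLast_of_not_prefix (h : ¬ x <+: c) :
    treeDist x.dropLast c + 1 = treeDist x c := by
  have hx : x ≠ [] := by rintro rfl; exact h nil_prefix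
  rw [← dropLast_append_getLast hx] at h ⊢
  rw [dropLast_concat, treeDist_append_singleton_of_not_prefix h]

/-- The hypothesis says that `y` lies on the tree path from `x` to `z`; no other list of the same
length as `x` and `z` does. -/
theorem eq_or_eq_of_treeDist_add_le {n : ℕ} (hx : x.length = n) (hy : y.length = n)
    (hz : z.length = n) (h : treeDist x y + treeDist y z ≤ treeDist x z) : y = x ∨ y = z := by
  have hxy := commonPrefixLength_le_length_left x y
  have hyz := commonPrefixLength_le_length_left y z
  have hxz := commonPrefixLength_le_length_left x z
  have := min_commonPrefixLength_le x y z
  simp only [treeDist, hx, hy, hz] at h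
  rcases le_total (commonPrefixLength x y) (commonPrefixLength y z) with hle | hle
  · right
    exact (commonPrefixLength_eq_length_iff.1 (by omega)).eq_of_length (by omega)
  · left
    exact ((commonPrefixLength_eq_length_iff.1 (by omega)).eq_of_length (by omega)).symm

end List

section IsChild

open List

variable {t : ℕ} {x y y₁ y₂ c : List (Fin t)}

theorem IsChild.ne (h : IsChild x y) : x ≠ y := by
  obtain ⟨i, rfl⟩ := h; simp

theorem isChild_dropLast (hx : x ≠ []) : IsChild x x.dropLast :=
  ⟨x.getLast hx, (dropLast_append_getLast hx).symm⟩

theorem treeDist_le_of_isChild (h : IsChild x y ∨ IsChild y x) :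
    treeDist x c ≤ treeDist y c + 1 := by
  rcases h with ⟨i, rfl⟩ | ⟨i, rfl⟩
  · have := treeDist_append_singleton y c i; omega
  · have := treeDist_append_singleton x c i; omega

theorem isChild_cases_of_treeDist_add_one_eq (h : IsChild x y ∨ IsChild y x)
    (hd : treeDist y c + 1 = treeDist x c) :
    (IsChild y x ∧ y <+: c) ∨ (IsChild x y ∧ ¬ x <+: c) := by
  rcases h with ⟨i, rfl⟩ | ⟨i, rfl⟩
  · refine .inr ⟨⟨i, rfl⟩, fun hp => ?_⟩
    have := treeDist_append_singleton_of_prefix hp; omega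
  · refine .inl ⟨⟨i, rfl⟩, by_contra fun hp => ?_⟩
    have := treeDist_append_singleton_of_not_prefix hp; omega

theorem eq_of_isChild_of_treeDist_add_one_eq (h₁ : IsChild x y₁ ∨ IsChild y₁ x)
    (h₂ : IsChild x y₂ ∨ IsChild y₂ x) (hd₁ : treeDist y₁ c + 1 = treeDist x c)
    (hd₂ : treeDist y₂ c + 1 = treeDist x c) : y₁ = y₂ := by
  rcases isChild_cases_of_treeDist_add_one_eq h₁ hd₁ with
    ⟨⟨i₁, rfl⟩, hp₁⟩ | ⟨⟨i₁, hi₁⟩, hp₁⟩ <;>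
  rcases isChild_cases_of_treeDist_add_one_eq h₂ hd₂ with
    ⟨⟨i₂, rfl⟩, hp₂⟩ | ⟨⟨i₂, hi₂⟩, hp₂⟩
  · exact (prefix_of_prefix_length_le hp₁ hp₂ (by simp)).eq_of_length (by simp)
  · exact absurd ((prefix_append _ _).trans hp₁) hp₂
  · exact absurd ((prefix_append _ _).trans hp₂) hp₁
  · exact (append_inj' (hi₁.symm.trans hi₂) rfl).1

end IsChild

namespace SimpleGraph

variable {V : Type*} {G : SimpleGraph V} {f g : V → ℕ} {S : Set V} {u v w b : V}

def UniqueDescentOn (G : SimpleGraph V) (f : V → ℕ) (S : Set V) : Prop :=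
  ∀ x ∈ S, ∀ y₁ y₂, G.Adj x y₁ → G.Adj x y₂ → f y₁ + 1 = f x → f y₂ + 1 = f x → y₁ = y₂

namespace Walk

/-- When `f` is 1-Lipschitz along edges, a tight walk is one along which `f` drops by one at
every step. -/
def IsTight (f : V → ℕ) (p : G.Walk u v) : Prop := p.length + f v = f u

theorem le_length_add (hf : ∀ x y, G.Adj x y → f x ≤ f y + 1) :
    ∀ {u} (p : G.Walk u v), f u ≤ p.length + f v
  | _, nil => by simp
  | _, cons h p => by
    have := hf _ _ h
    have := p.le_length_add hf
    rw [length_cons]; omega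

theorem IsTight.of_cons (hf : ∀ x y, G.Adj x y → f x ≤ f y + 1) {h : G.Adj u w}
    {p : G.Walk w v} (hp : (cons h p).IsTight f) : p.IsTight f ∧ f w + 1 = f u := by
  have := hf _ _ h
  have := p.le_length_add hf
  unfold IsTight at *; rw [length_cons] at hp; omega

theorem IsTight.isPath (hf : ∀ x y, G.Adj x y → f x ≤ f y + 1) :
    ∀ {u} {p : G.Walk u v}, p.IsTight f → p.IsPath
  | _, nil, _ => .nil
  | _, cons _ p, hp => by
    classical
    obtain ⟨hp', -⟩ := hp.of_cons hf
    refine (hp'.isPath hf).cons fun hu => ?_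
    have := (p.dropUntil _ hu).le_length_add hf
    have := p.length_dropUntil_le_length hu
    unfold IsTight at hp hp'; rw [length_cons] at hp; omega

theorem IsTight.dist_eq (hf : ∀ x y, G.Adj x y → f x ≤ f y + 1) {p : G.Walk u v}
    (hp : p.IsTight f) : G.dist u v = p.length := by
  refine le_antisymm (dist_le p) ?_
  obtain ⟨q, hq⟩ := p.reachable.exists_walk_length_eq_dist
  have := q.le_length_add hf
  unfold IsTight at hp; omega

theorem IsTight.isGeodesic (hf : ∀ x y, G.Adj x y → f x ≤ f y + 1) {p : G.Walk u v}
    (hp : p.IsTight f) : IsGeodesic G p :=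
  ⟨hp.isPath hf, (hp.dist_eq hf).symm⟩

theorem _root_.IsGeodesic.isTight (hf : ∀ x y, G.Adj x y → f x ≤ f y + 1)
    {p q : G.Walk u v} (hq : IsGeodesic G q) (hp : p.IsTight f) : q.IsTight f := by
  rw [IsTight, hq.2, hp.dist_eq hf]; exact hp

theorem add_le_length_of_mem_support (hf : ∀ x y, G.Adj x y → f x ≤ f y + 1)
    (hg : ∀ x y, G.Adj x y → g x ≤ g y + 1) (p : G.Walk u v) (hw : w ∈ p.support) :
    f w + g w ≤ p.length + f u + g v := by
  classical
  have hfw := (p.takeUntil w hw).reverse.le_length_add hf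
  have hgw := (p.dropUntil w hw).le_length_add hg
  have := congrArg length (p.take_spec hw)
  rw [length_append] at this
  rw [length_reverse] at hfw
  omega

theorem IsTight.eq_of_forall_mem_support (hf : ∀ x y, G.Adj x y → f x ≤ f y + 1)
    (hS : G.UniqueDescentOn f S) :
    ∀ {u} {p q : G.Walk u v}, p.IsTight f → q.IsTight f →
      (∀ z ∈ p.support, z ≠ v → z ∈ S) → (∀ z ∈ q.support, z ≠ v → z ∈ S) → p = q
  | _, nil, q, _, hq, _, _ => by
    unfold IsTight at hq
    exact (eq_nil_iff_nil.2 (length_eq_zero_iff.1 (by omega))).symm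
  | _, cons _ p, nil, hp, _, _, _ => by unfold IsTight at hp; rw [length_cons] at hp; omega
  | u, cons hy₁ p, cons hy₂ q, hp, hq, hpS, hqS => by
    obtain ⟨hp', hd₁⟩ := hp.of_cons hf
    obtain ⟨hq', hd₂⟩ := hq.of_cons hf
    have huv : u ≠ v := by
      rintro rfl; unfold IsTight at hp; rw [length_cons] at hp; omega
    obtain rfl := hS u (hpS u (by simp) huv) _ _ hy₁ hy₂ hd₁ hd₂
    rw [hp'.eq_of_forall_mem_support hf hS hq' (fun z hz => hpS z (by simp [hz]))
      (fun z hz => hqS z (by simp [hz]))]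

theorem IsTight.eq_of_getVert_one_eq (hf : ∀ x y, G.Adj x y → f x ≤ f y + 1)
    (hS : G.UniqueDescentOn f S)
    {p q : G.Walk u v} (hp : p.IsTight f) (hq : q.IsTight f)
    (hpS : ∀ z ∈ p.support, z ≠ u → z ≠ v → z ∈ S)
    (hqS : ∀ z ∈ q.support, z ≠ u → z ≠ v → z ∈ S)
    (h : p.getVert 1 = q.getVert 1) : p = q := by
  cases p with
  | nil => exact hp.eq_of_forall_mem_support hf hS hq (by simp) fun z hz h => hqS z hz h h
  | cons hy₁ p =>
    cases q with
    | nil =>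
      exact (hq.eq_of_forall_mem_support hf hS hp (by simp) fun z hz h => hpS z hz h h).symm
    | cons hy₂ q =>
      simp only [getVert_cons_succ, getVert_zero] at h
      subst h
      obtain ⟨hp', -⟩ := hp.of_cons hf
      obtain ⟨hq', -⟩ := hq.of_cons hf
      have hup := ((cons_isPath_iff _ _).1 (hp.isPath hf)).2
      have huq := ((cons_isPath_iff _ _).1 (hq.isPath hf)).2
      rw [hp'.eq_of_forall_mem_support hf hS hq'
        (fun z hz => hpS z (by simp [hz]) (by rintro rfl; exact hup hz))
        (fun z hz => hqS z (by simp [hz]) (by rintro rfl; exact huq hz))]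

end Walk

theorem exists_isTight_walk
    (hS : ∀ x ∈ S, ∃ y, G.Adj x y ∧ f y + 1 = f x ∧ (y = b ∨ y ∈ S)) {x : V} (hx : x ∈ S) :
    ∃ p : G.Walk x b, p.IsTight f ∧ ∀ z ∈ p.support, z ≠ b → z ∈ S := by
  induction hn : f x using Nat.strong_induction_on generalizing x with
  | _ n ih =>
  obtain ⟨y, hxy, hfy, rfl | hy⟩ := hS x hx
  · refine ⟨.cons hxy .nil, ?_, ?_⟩
    · simp only [Walk.IsTight, Walk.length_cons, Walk.length_nil]; omega
    · simp only [Walk.support_cons, Walk.support_nil, List.mem_cons, List.not_mem_nil, or_false]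
      rintro z (rfl | rfl) hz
      exacts [hx, absurd rfl hz]
  · obtain ⟨p, hp, hpS⟩ := ih (f y) (by omega) hy rfl
    refine ⟨.cons hxy p, ?_, ?_⟩
    · unfold Walk.IsTight at *; rw [Walk.length_cons]; omega
    · simp only [Walk.support_cons, List.mem_cons]
      rintro z (rfl | hz) hzb
      exacts [hx, hpS z hz hzb]

theorem exists_isTight_walk_of_adj
    (hS : ∀ x ∈ S, ∃ y, G.Adj x y ∧ f y + 1 = f x ∧ (y = b ∨ y ∈ S)) {x y : V}
    (hxy : G.Adj x y) (hfy : f y + 1 = f x) (hy : y ∈ S) :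
    ∃ p : G.Walk x b, p.IsTight f ∧ p.getVert 1 = y ∧
      ∀ z ∈ p.support, z ≠ x → z ≠ b → z ∈ S := by
  obtain ⟨p, hp, hpS⟩ := exists_isTight_walk hS hy
  refine ⟨.cons hxy p, ?_, by simp, ?_⟩
  · unfold Walk.IsTight at *; rw [Walk.length_cons]; omega
  · simp only [Walk.support_cons, List.mem_cons]
    rintro z (rfl | hz) hzx hzb
    exacts [absurd rfl hzx, hpS z hz hzb]

end SimpleGraph

namespace GTVert

variable {r t : ℕ}

def label : GTVert r t → List (Fin t)
  | .inl a => a.1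
  | .inr a => a.1

@[simp] theorem label_inl (a : {l : List (Fin t) // l.length ≤ r}) :
    label (Sum.inl a : GTVert r t) = a.1 := rfl

@[simp] theorem label_inr (a : {l : List (Fin t) // l.length < r}) :
    label (Sum.inr a : GTVert r t) = a.1 := rfl

theorem eq_of_label_eq_of_isLeft_eq {x y : GTVert r t} (h : x.label = y.label)
    (h' : Sum.isLeft x = Sum.isLeft y) : x = y := by
  rcases x with x | x <;> rcases y with y | y <;> simp only [Sum.isLeft_inl, Sum.isLeft_inr,
    reduceCtorEq] at h' <;> simp only [label_inl, label_inr] at h <;> rw [Subtype.ext h]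

end GTVert

section QuasiLeaf

variable {r t : ℕ} {u v : GTVert r t}

theorem IsQuasiLeaf.isLeft (hu : IsQuasiLeaf u) : Sum.isLeft u := by
  cases u <;> simp_all [IsQuasiLeaf]

theorem IsQuasiLeaf.length_label (hu : IsQuasiLeaf u) : u.label.length = r := by
  cases u <;> simp_all [IsQuasiLeaf]

theorem IsQuasiLeaf.eq_of_label_eq (hu : IsQuasiLeaf u) (hv : IsQuasiLeaf v)
    (h : u.label = v.label) : u = v :=
  GTVert.eq_of_label_eq_of_isLeft_eq h (by rw [hu.isLeft, hv.isLeft])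

theorem IsQuasiLeaf.not_label_prefix (hu : IsQuasiLeaf u) (hv : IsQuasiLeaf v) (huv : u ≠ v) :
    ¬ u.label <+: v.label :=
  fun h => huv <| hu.eq_of_label_eq hv <|
    h.eq_of_length (hu.length_label.trans hv.length_label.symm)

end QuasiLeaf

namespace GT

open SimpleGraph List

variable {r t : ℕ}

@[simp] theorem adj_inl_inl {a b : {l : List (Fin t) // l.length ≤ r}} :
    (GT r t).Adj (Sum.inl a) (Sum.inl b) ↔ IsChild a.1 b.1 ∨ IsChild b.1 a.1 := by
  refine (fromRel_adj _ _ _).trans ⟨fun h => h.2, fun h => ⟨fun hab => ?_, h⟩⟩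
  cases hab
  rcases h with h | h <;> exact h.ne rfl

@[simp] theorem adj_inr_inr {a b : {l : List (Fin t) // l.length < r}} :
    (GT r t).Adj (Sum.inr a) (Sum.inr b) ↔ IsChild a.1 b.1 ∨ IsChild b.1 a.1 := by
  refine (fromRel_adj _ _ _).trans ⟨fun h => h.2, fun h => ⟨fun hab => ?_, h⟩⟩
  cases hab
  rcases h with h | h <;> exact h.ne rfl

@[simp] theorem adj_inl_inr {a : {l : List (Fin t) // l.length ≤ r}}
    {b : {l : List (Fin t) // l.length < r}} :
    (GT r t).Adj (Sum.inl a) (Sum.inr b) ↔ a.1.length = r ∧ IsChild a.1 b.1 :=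
  (fromRel_adj _ _ _).trans ⟨fun h => h.2.resolve_right id, fun h => ⟨Sum.inl_ne_inr, .inl h⟩⟩

@[simp] theorem adj_inr_inl {a : {l : List (Fin t) // l.length < r}}
    {b : {l : List (Fin t) // l.length ≤ r}} :
    (GT r t).Adj (Sum.inr a) (Sum.inl b) ↔ b.1.length = r ∧ IsChild b.1 a.1 :=
  (fromRel_adj _ _ _).trans ⟨fun h => h.2.resolve_left id, fun h => ⟨Sum.inr_ne_inl, .inr h⟩⟩

theorem isChild_label_of_adj {x y : GTVert r t} (h : (GT r t).Adj x y) :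
    IsChild x.label y.label ∨ IsChild y.label x.label := by
  rcases x with x | x <;> rcases y with y | y <;> simp_all

theorem treeDist_label_le_of_adj (c : List (Fin t)) :
    ∀ x y : GTVert r t, (GT r t).Adj x y → treeDist x.label c ≤ treeDist y.label c + 1 :=
  fun _ _ h => treeDist_le_of_isChild (isChild_label_of_adj h)

theorem uniqueDescentOn_not_isQuasiLeaf (c : List (Fin t)) :
    (GT r t).UniqueDescentOn (fun w => treeDist w.label c) {x | ¬ IsQuasiLeaf x} := by
  intro x (hx : ¬ IsQuasiLeaf x) y₁ y₂ h₁ h₂ hd₁ hd₂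
  have hl := eq_of_isChild_of_treeDist_add_one_eq (isChild_label_of_adj h₁)
    (isChild_label_of_adj h₂) hd₁ hd₂
  refine GTVert.eq_of_label_eq_of_isLeft_eq hl ?_
  rcases x with x | x <;> rcases y₁ with y₁ | y₁ <;> rcases y₂ with y₂ | y₂ <;>
    simp_all [IsQuasiLeaf]
  all_goals
    have := congrArg List.length hl
    have := y₁.2
    have := y₂.2
    omega

theorem label_eq_dropLast_of_adj {u x : GTVert r t} (hu : IsQuasiLeaf u)
    (h : (GT r t).Adj u x) : x.label = u.label.dropLast := by
  cases u with
  | inr => exact hu.elim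
  | inl a =>
    cases x with
    | inl x =>
      obtain ⟨i, hi⟩ | ⟨i, hi⟩ := adj_inl_inl.1 h
      · exact (congrArg dropLast hi).trans dropLast_concat |>.symm
      · have hlen : x.1.length = a.1.length + 1 := by simp [hi]
        have : a.1.length = r := hu
        have := x.2
        omega
    | inr x =>
      obtain ⟨-, i, hi⟩ := adj_inl_inr.1 h
      exact (congrArg dropLast hi).trans dropLast_concat |>.symm

theorem exists_adj_treeDist_add_one_eq_of_inCopyOne {v : GTVert r t} (hv : IsQuasiLeaf v) :
    ∀ x, InCopyOne x → ∃ y, (GT r t).Adj x y ∧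
      treeDist y.label v.label + 1 = treeDist x.label v.label ∧ (y = v ∨ InCopyOne y) := by
  rintro (⟨l, _⟩ | x) hx
  · have hlt : l.length < r := hx
    by_cases hp : l <+: v.label
    · obtain ⟨i, hi⟩ := hp.exists_append_singleton_prefix (by rw [hv.length_label]; exact hlt)
      have hle : (l ++ [i]).length ≤ r := hv.length_label ▸ hi.length_le
      refine ⟨Sum.inl ⟨l ++ [i], hle⟩, adj_inl_inl.2 (.inr ⟨i, rfl⟩),
        treeDist_append_singleton_of_prefix hi, ?_⟩
      rcases hle.lt_or_eq with hlt' | heq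
      · exact .inr hlt'
      · exact .inl (IsQuasiLeaf.eq_of_label_eq (u := Sum.inl ⟨_, hle⟩) heq hv
          (hi.eq_of_length (by rw [hv.length_label]; exact heq)))
    · have hne : l ≠ [] := by rintro rfl; exact hp nil_prefix
      have hlt' : l.dropLast.length < r := by rw [length_dropLast]; omega
      exact ⟨Sum.inl ⟨l.dropLast, hlt'.le⟩, adj_inl_inl.2 (.inl (isChild_dropLast hne)),
        treeDist_dropLast_of_not_prefix hp, .inr hlt'⟩
  · exact hx.elim

theorem exists_adj_treeDist_add_one_eq_of_inCopyTwo {v : GTVert r t} (hv : IsQuasiLeaf v) :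
    ∀ x, InCopyTwo x → ∃ y, (GT r t).Adj x y ∧
      treeDist y.label v.label + 1 = treeDist x.label v.label ∧ (y = v ∨ InCopyTwo y) := by
  rintro (x | ⟨l, hlt⟩) hx
  · exact hx.elim
  · by_cases hp : l <+: v.label
    · obtain ⟨i, hi⟩ := hp.exists_append_singleton_prefix (by rw [hv.length_label]; exact hlt)
      have hle : (l ++ [i]).length ≤ r := hv.length_label ▸ hi.length_le
      rcases hle.lt_or_eq with hlt' | heq
      · exact ⟨Sum.inr ⟨l ++ [i], hlt'⟩, adj_inr_inr.2 (.inr ⟨i, rfl⟩),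
          treeDist_append_singleton_of_prefix hi, .inr trivial⟩
      · cases v with
        | inr => exact hv.elim
        | inl b =>
          have hb : l ++ [i] = b.1 := hi.eq_of_length (by rw [hv.length_label]; exact heq)
          refine ⟨Sum.inl b, adj_inr_inl.2 ⟨hv, i, hb.symm⟩, ?_, .inl rfl⟩
          simpa [hb] using treeDist_append_singleton_of_prefix hi
    · have hne : l ≠ [] := by rintro rfl; exact hp nil_prefix
      have hlt' : l.dropLast.length < r := by rw [length_dropLast]; omega
      exact ⟨Sum.inr ⟨l.dropLast, hlt'⟩, adj_inr_inr.2 (.inl (isChild_dropLast hne)),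
        treeDist_dropLast_of_not_prefix hp, .inr trivial⟩

variable {u v : GTVert r t}

theorem eq_or_eq_of_mem_support_of_isQuasiLeaf (hu : IsQuasiLeaf u) (hv : IsQuasiLeaf v)
    {p : (GT r t).Walk u v} (hp : p.IsTight fun w => treeDist w.label v.label) {z : GTVert r t}
    (hz : z ∈ p.support) (hzq : IsQuasiLeaf z) : z = u ∨ z = v := by
  have := p.add_le_length_of_mem_support (treeDist_label_le_of_adj u.label)
    (treeDist_label_le_of_adj v.label) hz
  rw [Walk.IsTight, treeDist_self] at hp
  rw [treeDist_self, treeDist_self, treeDist_comm z.label] at this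
  rcases eq_or_eq_of_treeDist_add_le hu.length_label hzq.length_label hv.length_label
    (by omega) with h | h
  exacts [.inl (hzq.eq_of_label_eq hu h), .inr (hzq.eq_of_label_eq hv h)]

theorem exists_isTight_inCopyOne (hu : IsQuasiLeaf u) (hv : IsQuasiLeaf v) (huv : u ≠ v) :
    ∃ p : (GT r t).Walk u v, p.IsTight (fun w => treeDist w.label v.label) ∧
      Sum.isLeft (p.getVert 1) ∧ ∀ z ∈ p.support, z ≠ u → z ≠ v → InCopyOne z := by
  have hp := hu.not_label_prefix hv huv
  have hne : u.label ≠ [] := by rintro h; exact hp (h ▸ nil_prefix)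
  have hlt : u.label.dropLast.length < r := by
    have := hu.length_label; have := length_pos_iff.2 hne; rw [length_dropLast]; omega
  have hadj : (GT r t).Adj u (Sum.inl ⟨_, hlt.le⟩) := by
    cases u with
    | inl a => exact adj_inl_inl.2 (.inl (isChild_dropLast hne))
    | inr => exact hu.elim
  obtain ⟨p, hp, hp₁, hpS⟩ := exists_isTight_walk_of_adj (S := {x | InCopyOne x})
    (exists_adj_treeDist_add_one_eq_of_inCopyOne hv) hadj (treeDist_dropLast_of_not_prefix hp)
    hlt
  exact ⟨p, hp, by simp [hp₁], hpS⟩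

theorem exists_isTight_inCopyTwo (hu : IsQuasiLeaf u) (hv : IsQuasiLeaf v) (huv : u ≠ v) :
    ∃ p : (GT r t).Walk u v, p.IsTight (fun w => treeDist w.label v.label) ∧
      Sum.isRight (p.getVert 1) ∧ ∀ z ∈ p.support, z ≠ u → z ≠ v → InCopyTwo z := by
  have hp := hu.not_label_prefix hv huv
  have hne : u.label ≠ [] := by rintro h; exact hp (h ▸ nil_prefix)
  have hlt : u.label.dropLast.length < r := by
    have := hu.length_label; have := length_pos_iff.2 hne; rw [length_dropLast]; omega
  have hadj : (GT r t).Adj u (Sum.inr ⟨_, hlt⟩) := by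
    cases u with
    | inl a => exact adj_inl_inr.2 ⟨hu, isChild_dropLast hne⟩
    | inr => exact hu.elim
  obtain ⟨p, hp, hp₁, hpS⟩ := exists_isTight_walk_of_adj (S := {x | InCopyTwo x})
    (exists_adj_treeDist_add_one_eq_of_inCopyTwo hv) hadj (treeDist_dropLast_of_not_prefix hp)
    trivial
  exact ⟨p, hp, by simp [hp₁], hpS⟩

theorem eq_of_isTight_of_isLeft_eq (hu : IsQuasiLeaf u) (hv : IsQuasiLeaf v) (huv : u ≠ v)
    {p q : (GT r t).Walk u v} (hp : p.IsTight fun w => treeDist w.label v.label)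
    (hq : q.IsTight fun w => treeDist w.label v.label)
    (h : Sum.isLeft (p.getVert 1) = Sum.isLeft (q.getVert 1)) : p = q := by
  have hf := treeDist_label_le_of_adj (r := r) v.label
  have hpos : 0 < treeDist u.label v.label :=
    Nat.pos_of_ne_zero fun h => huv (hu.eq_of_label_eq hv (treeDist_eq_zero_iff.1 h))
  have interior {w : (GT r t).Walk u v} (hw : w.IsTight fun w => treeDist w.label v.label) :
      ∀ z ∈ w.support, z ≠ u → z ≠ v → z ∈ {x | ¬ IsQuasiLeaf x} := fun z hz hzu hzv hzq =>
    (eq_or_eq_of_mem_support_of_isQuasiLeaf hu hv hw hz hzq).elim hzu hzv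
  have second {w : (GT r t).Walk u v} (hw : w.IsTight fun w => treeDist w.label v.label) :
      (GT r t).Adj u (w.getVert 1) := by
    simpa using w.adj_getVert_succ (i := 0) (by rw [Walk.IsTight, treeDist_self] at hw; omega)
  exact hp.eq_of_getVert_one_eq hf (uniqueDescentOn_not_isQuasiLeaf _) hq
    (interior hp) (interior hq)
    (GTVert.eq_of_label_eq_of_isLeft_eq (by rw [label_eq_dropLast_of_adj hu (second hp),
      label_eq_dropLast_of_adj hu (second hq)]) h)

end GT

theorem GT_two_geodesics_between_quasiLeaves_general (r : ℕ)
    (u v : GTVert r 2) (hu : IsQuasiLeaf u) (hv : IsQuasiLeaf v) (huv : u ≠ v) :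
    ∃ p q : (GT r 2).Walk u v,
      IsGeodesic (GT r 2) p ∧ IsGeodesic (GT r 2) q ∧ p ≠ q ∧
      (∀ z ∈ p.support, z ≠ u → z ≠ v → InCopyOne z) ∧
      (∀ z ∈ q.support, z ≠ u → z ≠ v → InCopyTwo z) ∧
      (∀ w : (GT r 2).Walk u v, IsGeodesic (GT r 2) w → w = p ∨ w = q) := by
  have hf := GT.treeDist_label_le_of_adj (r := r) v.label
  obtain ⟨p, hp, hp₁, hpS⟩ := GT.exists_isTight_inCopyOne hu hv huv
  obtain ⟨q, hq, hq₁, hqS⟩ := GT.exists_isTight_inCopyTwo hu hv huv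
  refine ⟨p, q, hp.isGeodesic hf, hq.isGeodesic hf, ?_, hpS, hqS, fun w hw => ?_⟩
  · rintro rfl
    exact Sum.not_isLeft.2 hq₁ hp₁
  · have hw := hw.isTight hf hp
    cases hw₁ : Sum.isLeft (w.getVert 1)
    · exact .inr (GT.eq_of_isTight_of_isLeft_eq hu hv huv hw hq
        (hw₁.trans (Sum.isLeft_eq_false.2 hq₁).symm))
    · exact .inl (GT.eq_of_isTight_of_isLeft_eq hu hv huv hw hp (hw₁.trans hp₁.symm))

/-- Between any two distinct quasi-leaves of the glued binary tree `GT(r)`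
there are exactly two geodesics: one with all internal vertices in the first
tree copy and one with all internal vertices in the second tree copy. -/
theorem GT_two_geodesics_between_quasiLeaves (r : ℕ) (hr : 1 ≤ r)
    (u v : GTVert r 2) (hu : IsQuasiLeaf u) (hv : IsQuasiLeaf v) (huv : u ≠ v) :
    ∃ p q : (GT r 2).Walk u v,
      IsGeodesic (GT r 2) p ∧ IsGeodesic (GT r 2) q ∧ p ≠ q ∧
      (∀ z ∈ p.support, z ≠ u → z ≠ v → InCopyOne z) ∧
      (∀ z ∈ q.support, z ≠ u → z ≠ v → InCopyTwo z) ∧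
      (∀ w : (GT r 2).Walk u v, IsGeodesic (GT r 2) w → w = p ∨ w = q) :=
  GT_two_geodesics_between_quasiLeaves_general r u v hu hv huv
end

section
/- If a cycle C of length L in a graph G satisfies that every mutual-visibility set of G intersects V(C) in at most 3 vertices, then any mutual-visibility coloring of G with k colors uses at least L − 2k colors that each appear at least three times on C. In particular, if L > 3k, no mutual-visibility coloring of G with k colors exists. -/
/-- Counting lemma: if every mutual-visibility set of `G` meets a cycle `C` of
length `L` in at most 3 vertices, then any mutual-visibility coloring with `k`
colors uses at least `L - 2k` colors each appearing at least three times on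
`C`; in particular if `L > 3k` there is no mutual-visibility coloring with `k`
colors. -/
theorem mv_cycle_counting {V : Type*} (G : SimpleGraph V) (v : V)
    (c : G.Walk v v) (hc : c.IsCycle) (L : ℕ) (hL : c.length = L)
    (h3 : ∀ S : Set V, MVSet G S → (S ∩ {z | z ∈ c.support}).ncard ≤ 3) :
    (∀ (k : ℕ) (f : V → Fin k), MVColoring G f →
      L - 2 * k ≤ {a : Fin k | 3 ≤ {z | z ∈ c.support ∧ f z = a}.ncard}.ncard) ∧
    (∀ k : ℕ, 3 * k < L → ¬∃ f : V → Fin k, MVColoring G f) := by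
  classical
  have h3len := hc.three_le_length
  have htlen : c.support.tail.length = L := by
    have hs := c.length_support
    have hcons := c.support_eq_cons
    rw [hcons, List.length_cons] at hs
    omega
  have htne : c.support.tail ≠ [] := by
    intro h
    rw [h] at htlen
    simp at htlen
    omega
  have hv : v ∈ c.support.tail := by
    have h2 : c.support = v :: c.support.tail := c.support_eq_cons
    have h1 : (v :: c.support.tail).getLast (List.cons_ne_nil _ _) = v := by
      rw [← List.getLast_congr (SimpleGraph.Walk.support_ne_nil c) _ h2]
      exact SimpleGraph.Walk.getLast_support c
    rw [List.getLast_cons htne] at h1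
    have hm := List.getLast_mem htne
    rwa [h1] at hm
  set C : Finset V := c.support.tail.toFinset with hCdef
  have hmem : ∀ z, z ∈ c.support ↔ z ∈ C := by
    intro z
    rw [SimpleGraph.Walk.mem_support_iff]
    simp only [hCdef, List.mem_toFinset]
    constructor
    · rintro (rfl | h)
      · exact hv
      · exact h
    · intro h; exact Or.inr h
  have hCcard : C.card = L := by
    rw [hCdef, List.card_toFinset, hc.support_nodup.dedup, htlen]
  -- main counting lemma for a coloring
  have main : ∀ (k : ℕ) (f : V → Fin k), MVColoring G f →
      L ≤ 2 * k + {a : Fin k | 3 ≤ {z | z ∈ c.support ∧ f z = a}.ncard}.ncard ∧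
      L ≤ 3 * k := by
    intro k f hf
    set n : Fin k → ℕ := fun a => (C.filter (fun z => f z = a)).card with hn
    have hfib : ∀ a : Fin k,
        {z | z ∈ c.support ∧ f z = a} = ↑(C.filter (fun z => f z = a)) := by
      intro a
      ext z
      simp [hmem z]
    have hn3 : ∀ a : Fin k, n a ≤ 3 := by
      intro a
      have h1 := h3 {w | f w = a} (hf a)
      have h2 : {w | f w = a} ∩ {z | z ∈ c.support}
          = {z | z ∈ c.support ∧ f z = a} := by
        ext z; simp [and_comm]
      rw [h2, hfib a, Set.ncard_coe_finset] at h1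
      exact h1
    have hsum : ∑ a : Fin k, n a = L := by
      rw [← hCcard]
      exact (Finset.card_eq_sum_card_fiberwise
        (fun x _ => Finset.mem_univ (f x))).symm
    set T : Finset (Fin k) := Finset.univ.filter (fun a => 3 ≤ n a) with hT
    have hTk : T.card ≤ k := by
      simpa using Finset.card_filter_le Finset.univ (fun a => 3 ≤ n a)
    have hsplit : ∑ a : Fin k, n a
        = ∑ a ∈ T, n a + ∑ a ∈ Finset.univ.filter (fun a => ¬ 3 ≤ n a), n a :=
      (Finset.sum_filter_add_sum_filter_not _ _ _).symm
    have hb1 : ∑ a ∈ T, n a ≤ T.card * 3 :=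
      Finset.sum_le_card_nsmul _ _ 3 (fun a _ => hn3 a)
    have hb2 : ∑ a ∈ Finset.univ.filter (fun a => ¬ 3 ≤ n a), n a
        ≤ (Finset.univ.filter (fun a => ¬ 3 ≤ n a)).card * 2 := by
      refine Finset.sum_le_card_nsmul _ _ 2 ?_
      intro a ha
      have := (Finset.mem_filter.mp ha).2
      omega
    have hcards : T.card + (Finset.univ.filter (fun a => ¬ 3 ≤ n a)).card = k := by
      rw [hT, Finset.card_filter_add_card_filter_not]
      simp
    have hgoalset : {a : Fin k | 3 ≤ {z | z ∈ c.support ∧ f z = a}.ncard} = ↑T := by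
      ext a
      simp only [hT, Set.mem_setOf_eq, Finset.coe_filter, Finset.mem_univ, true_and]
      rw [hfib a, Set.ncard_coe_finset]
    have hbound : L ≤ 3 * k := by
      rw [← hsum]
      calc ∑ a : Fin k, n a ≤ Finset.univ.card * 3 :=
            Finset.sum_le_card_nsmul _ _ 3 (fun a _ => hn3 a)
        _ = 3 * k := by simp [Nat.mul_comm]
    constructor
    · rw [hgoalset, Set.ncard_coe_finset]
      omega
    · exact hbound
  constructor
  · intro k f hf
    have := (main k f hf).1
    omega
  · rintro k hk ⟨f, hf⟩
    have := (main k f hf).2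
    omega
end

section
/- In the graph G constructed in the NP-completeness reduction (from a NAE3SAT instance with q variables and r clauses, containing variable gadgets H_2^{(i)}, clause gadgets H_3^{(j)}, and two universal-like vertices z, z' adjacent to all vertices u_i, ū_i, a_i, v_j), the diameter of G equals 4. -/
/-- The vertices of the graph built in the NP-completeness reduction from a
NAE3SAT instance with `q` variables and `r` clauses. -/
inductive RedVert (q r : ℕ) : Type
  | p : RedVert q r
  | c : RedVert q r
  | z : RedVert q r
  | z' : RedVert q r
  | u : Fin q → Bool → RedVert q r   -- literal vertices `u_i` (true) and `ū_i` (false)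
  | a : Fin q → RedVert q r
  | b : Fin q → RedVert q r
  | v : Fin r → RedVert q r
  | w : Fin r → RedVert q r
  deriving DecidableEq

/-- The graph of the reduction: variable gadgets `H₂⁽ⁱ⁾`, clause gadgets
`H₃⁽ʲ⁾` (with literal vertices given by `clauses`), and the two vertices
`z, z'` adjacent to all `u_i, ū_i, a_i, v_j`. -/
def redGraph (q r : ℕ) (clauses : Fin r → Fin 3 → Fin q × Bool) :
    SimpleGraph (RedVert q r) :=
  SimpleGraph.fromRel (fun x y =>
    match x, y with
    | .p, .c => True
    | .u _ _, .c => True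
    | .u i _, .a i' => i = i'
    | .a i, .b i' => i = i'
    | .v j, .w j' => j = j'
    | .v j, .u i bb => ∃ k : Fin 3, clauses j k = (i, bb)
    | .z, .u _ _ => True
    | .z, .a _ => True
    | .z, .v _ => True
    | .z', .u _ _ => True
    | .z', .a _ => True
    | .z', .v _ => True
    | _, _ => False)

/-- Potential function used to bound `dist p (b i)` from below. -/
private def redF {q r : ℕ} : RedVert q r → ℕ
  | .p => 0
  | .c => 1
  | .u _ _ => 2
  | .a _ => 3
  | .b _ => 4
  | .z => 3
  | .z' => 3
  | .v _ => 3
  | .w _ => 4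

private lemma redF_adj {q r : ℕ} (clauses : Fin r → Fin 3 → Fin q × Bool)
    {x y : RedVert q r} (h : (redGraph q r clauses).Adj x y) :
    redF y ≤ redF x + 1 := by
  rw [redGraph, SimpleGraph.fromRel_adj] at h
  obtain ⟨-, h | h⟩ := h <;> cases x <;> cases y <;> simp_all [redF]

private lemma redF_walk {q r : ℕ} (clauses : Fin r → Fin 3 → Fin q × Bool)
    {x y : RedVert q r} (w : (redGraph q r clauses).Walk x y) :
    redF y ≤ redF x + w.length := by
  induction w with
  | nil => simp
  | cons h w ih =>
      have := redF_adj clauses h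
      simp only [SimpleGraph.Walk.length_cons]
      omega

/-- The graph constructed in the NP-completeness reduction has diameter 4
(for an instance with at least one variable whose clauses each involve three
distinct variables). -/
theorem redGraph_diam (q r : ℕ) (hq : 0 < q)
    (clauses : Fin r → Fin 3 → Fin q × Bool)
    (hdistinct : ∀ j : Fin r, Function.Injective (fun k => (clauses j k).1)) :
    (redGraph q r clauses).diam = 4 := by
  set G := redGraph q r clauses with hG
  set i0 : Fin q := ⟨0, hq⟩
  -- basic adjacencies
  have mkAdj : ∀ {x y : RedVert q r}, x ≠ y →
      ((match x, y with
        | .p, .c => True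
        | .u _ _, .c => True
        | .u i _, .a i' => i = i'
        | .a i, .b i' => i = i'
        | .v j, .w j' => j = j'
        | .v j, .u i bb => ∃ k : Fin 3, clauses j k = (i, bb)
        | .z, .u _ _ => True
        | .z, .a _ => True
        | .z, .v _ => True
        | .z', .u _ _ => True
        | .z', .a _ => True
        | .z', .v _ => True
        | _, _ => False) ∨
       (match y, x with
        | .p, .c => True
        | .u _ _, .c => True
        | .u i _, .a i' => i = i'
        | .a i, .b i' => i = i'
        | .v j, .w j' => j = j'
        | .v j, .u i bb => ∃ k : Fin 3, clauses j k = (i, bb)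
        | .z, .u _ _ => True
        | .z, .a _ => True
        | .z, .v _ => True
        | .z', .u _ _ => True
        | .z', .a _ => True
        | .z', .v _ => True
        | _, _ => False)) → G.Adj x y := by
    intro x y hne hr
    exact (SimpleGraph.fromRel_adj _ _ _).mpr ⟨hne, hr⟩
  have hpc : G.Adj .p .c := mkAdj (by intro h; cases h) (Or.inl trivial)
  have hcu : ∀ i bb, G.Adj .c (.u i bb) := fun i bb =>
    mkAdj (by intro h; cases h) (Or.inr trivial)
  have hua : ∀ i bb, G.Adj (.u i bb) (.a i) := fun i bb =>
    mkAdj (by intro h; cases h) (Or.inl rfl)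
  have hab : ∀ i, G.Adj (.a i) (.b i) := fun i =>
    mkAdj (by intro h; cases h) (Or.inl rfl)
  have huz : ∀ i bb, G.Adj (.u i bb) .z := fun i bb =>
    mkAdj (by intro h; cases h) (Or.inr trivial)
  have haz : ∀ i, G.Adj (.a i) .z := fun i =>
    mkAdj (by intro h; cases h) (Or.inr trivial)
  have hvz : ∀ j, G.Adj (.v j) .z := fun j =>
    mkAdj (by intro h; cases h) (Or.inr trivial)
  have hz'u : ∀ i bb, G.Adj .z' (.u i bb) := fun i bb =>
    mkAdj (by intro h; cases h) (Or.inl trivial)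
  have hvw : ∀ j, G.Adj (.v j) (.w j) := fun j =>
    mkAdj (by intro h; cases h) (Or.inl rfl)
  have huv : ∀ j, G.Adj (.u (clauses j 0).1 (clauses j 0).2) (.v j) := fun j =>
    mkAdj (by intro h; cases h) (Or.inr ⟨0, rfl⟩)
  -- every vertex other than p is within distance 2 of z
  have hz2 : ∀ x : RedVert q r, x ≠ .p → G.edist x .z ≤ 2 := by
    intro x hx
    cases x with
    | p => exact absurd rfl hx
    | c =>
        have := G.edist_le ((hcu i0 true).toWalk.concat (huz i0 true))
        simpa using this
    | z => simp [SimpleGraph.edist_self]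
    | z' =>
        have := G.edist_le ((hz'u i0 true).toWalk.concat (huz i0 true))
        simpa using this
    | u i bb =>
        have := G.edist_le (huz i bb).toWalk
        simp at this
        exact this.trans (by norm_num)
    | a i =>
        have := G.edist_le (haz i).toWalk
        simp at this
        exact this.trans (by norm_num)
    | b i =>
        have := G.edist_le ((hab i).symm.toWalk.concat (haz i))
        simpa using this
    | v j =>
        have := G.edist_le (hvz j).toWalk
        simp at this
        exact this.trans (by norm_num)
    | w j =>
        have := G.edist_le ((hvw j).symm.toWalk.concat (hvz j))
        simpa using this
  -- every vertex is within distance 3 of c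
  have hc3 : ∀ y : RedVert q r, G.edist .c y ≤ 3 := by
    intro y
    cases y with
    | p =>
        have := G.edist_le hpc.symm.toWalk
        simp at this
        exact this.trans (by norm_num)
    | c => simp [SimpleGraph.edist_self]
    | z =>
        have := G.edist_le ((hcu i0 true).toWalk.concat (huz i0 true))
        simp at this
        exact this.trans (by norm_num)
    | z' =>
        have := G.edist_le ((hcu i0 true).toWalk.concat (hz'u i0 true).symm)
        simp at this
        exact this.trans (by norm_num)
    | u i bb =>
        have := G.edist_le (hcu i bb).toWalk
        simp at this
        exact this.trans (by norm_num)
    | a i =>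
        have := G.edist_le ((hcu i true).toWalk.concat (hua i true))
        simp at this
        exact this.trans (by norm_num)
    | b i =>
        have := G.edist_le
          (((hcu i true).toWalk.concat (hua i true)).concat (hab i))
        simpa using this
    | v j =>
        have := G.edist_le
          ((hcu (clauses j 0).1 (clauses j 0).2).toWalk.concat (huv j))
        simp at this
        exact this.trans (by norm_num)
    | w j =>
        have := G.edist_le
          (((hcu (clauses j 0).1 (clauses j 0).2).toWalk.concat
            (huv j)).concat (hvw j))
        simpa using this
  -- upper bound on the extended diameter
  have hub : G.ediam ≤ 4 := by
    apply SimpleGraph.ediam_le_of_edist_le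
    intro x y
    by_cases hx : x = RedVert.p
    · subst hx
      calc G.edist .p y ≤ G.edist .p .c + G.edist .c y := G.edist_triangle
        _ ≤ 1 + 3 := by
            gcongr
            · have := G.edist_le hpc.toWalk; simpa using this
            · exact hc3 y
        _ = 4 := by norm_num
    · by_cases hy : y = RedVert.p
      · subst hy
        rw [SimpleGraph.edist_comm]
        calc G.edist .p x ≤ G.edist .p .c + G.edist .c x := G.edist_triangle
          _ ≤ 1 + 3 := by
              gcongr
              · have := G.edist_le hpc.toWalk; simpa using this
              · exact hc3 x
          _ = 4 := by norm_num
      · calc G.edist x y ≤ G.edist x .z + G.edist .z y := G.edist_triangle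
          _ ≤ 2 + 2 := by
              gcongr
              · exact hz2 x hx
              · rw [SimpleGraph.edist_comm]; exact hz2 y hy
          _ = 4 := by norm_num
  -- lower bound: dist from p to b i0 is at least 4
  have hlb : (4 : ℕ∞) ≤ G.edist .p (.b i0) := by
    rw [SimpleGraph.edist_eq_sInf]
    apply le_sInf
    rintro _ ⟨wk, rfl⟩
    have := redF_walk clauses wk
    simp [redF] at this
    show (4 : ℕ∞) ≤ (wk.length : ℕ∞)
    exact_mod_cast this
  have hediam : G.ediam = 4 :=
    le_antisymm hub (hlb.trans SimpleGraph.edist_le_ediam)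
  rw [SimpleGraph.diam, hediam]
  rfl
end
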